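/- There exist finite (S × S)-sets Y and Z and a positive integer n not divisible by p with the following property. Call a subgroup D ≤ S × S a G-graph if there are a subgroup P ≤ S and an element g ∈ G with gPg⁻¹ ≤ S such that D = {(gug⁻¹, u) : u ∈ P} (then P is the image of D under the second projection). For every subgroup D ≤ S × S: if D is a G-graph with associated subgroup P, then |Y^D| · |N_G(P,S)| = |Z^D| · |N_G(P,S)| + n · |S| · |C_G(P)|; and if D is not a G-graph, then |Y^D| = |Z^D|. (This realizes the paper's Theorem B: the characteristic idempotent ω_F of F = F_S(G) is the element (Y − Z)/n of A(S,S)_(p), with Φ_{Δ(P,φ)}(ω_F) = |S|/|Hom_F(P,S)| = |S|·|C_G(P)|/|N_G(P,S)| on graphs of fusion morphisms and vanishing marks elsewhere; taking D trivial gives the augmentation ε(ω_F) = 1.) -/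

import Mathlib

/-- The transporter `N_G(A,B) = {g ∈ G : gAg⁻¹ ≤ B}`. -/
def transporter {G : Type*} [Group G] (A B : Subgroup G) : Set G :=
  {g : G | ∀ a ∈ A, g * a * g⁻¹ ∈ B}

/-- The graph `{(gug⁻¹, u) : u ∈ P}` of the conjugation homomorphism `u ↦ gug⁻¹`
on `P`, as a subgroup of `G × G`. -/
def graphOf {G : Type*} [Group G] (g : G) (P : Subgroup G) : Subgroup (G × G) :=
  Subgroup.map ((MulAut.conj g).toMonoidHom.prod (MonoidHom.id G)) P

/-- `D ≤ S × S` is a `G`-graph if it is the graph of a conjugation homomorphism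
induced by an element of `G` on a subgroup `P ≤ S` with `gPg⁻¹ ≤ S`. -/
def IsGGraph {G : Type*} [Group G] (S : Subgroup G) (D : Subgroup (G × G)) : Prop :=
  ∃ (P : Subgroup G) (g : G), P ≤ S ∧ (∀ u ∈ P, g * u * g⁻¹ ∈ S) ∧ D = graphOf g P

/-- The number of fixed points `|X^Q|` of an `S`-set `X` under a subgroup
`Q` of the ambient group, where the `S`-action is given explicitly by `m`. -/
noncomputable def fixCard {H : Type*} [Group H] (S Q : Subgroup H) (X : Type)
    (m : MulAction ↥S X) : ℕ :=
  letI := m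
  Nat.card ↥{x : X | ∀ s : ↥S, (s : H) ∈ Q → s • x = x}

/-!
Write `Ω = G ⧸ S` and `k(P) = |Ω^P|` for `P ≤ S`; then `|N_G(P,S)| = k(P) · |S|` and, since
`S` is a Sylow subgroup, `k(P)` is prime to `p` and at most `|Ω|`. Interpolation gives an integer
polynomial `q` with `k · q(k) = n` for every `k ≤ |Ω|` prime to `p`, where `n` is the product of
those `k`. Splitting `q` into the positive and negative parts of its coefficients, `q = a - b`,
the polynomials `a` and `b` are realized as `G`-sets `A` with `|A^P| = a(k(P))` (disjoint unions
of powers of `Ω`). The bisets are `Y = G × A₊` and `Z = G × A₋`, with `(s, t) · (x, α) =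
(s x t⁻¹, t α)`. A subgroup `D ≤ S × S` fixing a point `(x, α)` is the graph of conjugation by
`x`, and the graph of conjugation by `g` on `P` fixes exactly the points with `g⁻¹ x ∈ C_G(P)` and `α ∈ A^P`.
-/

open MulAction Polynomial

theorem Polynomial.exists_mul_eval_eq_prod {R : Type*} [CommRing R] (V : Finset R) :
    ∃ q : R[X], ∀ k ∈ V, k * q.eval k = ∏ v ∈ V, v := by
  set f : R[X] := ∏ v ∈ V, (C v - X)
  refine ⟨-f.divX, fun k hk => ?_⟩
  have hfk : f.eval k = 0 := by
    rw [eval_prod]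
    exact Finset.prod_eq_zero hk (by simp)
  have hf0 : f.coeff 0 = ∏ v ∈ V, v := by
    simp [f, coeff_zero_eq_eval_zero, eval_prod]
  have := congrArg (eval k) (X_mul_divX_add f)
  rw [eval_add, eval_mul, eval_X, eval_C, hfk, hf0] at this
  rw [eval_neg, mul_neg, neg_eq_iff_eq_neg, ← sub_eq_zero, sub_neg_eq_add, this]

theorem Polynomial.exists_natCoeffs_eval_eq_sub (q : ℤ[X]) :
    ∃ (d : ℕ) (a b : ℕ → ℕ), ∀ x : ℤ,
      q.eval x =
        ∑ i ∈ Finset.range d, (a i : ℤ) * x ^ i - ∑ i ∈ Finset.range d, (b i : ℤ) * x ^ i := by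
  refine ⟨q.natDegree + 1, fun i => (q.coeff i).toNat, fun i => (-q.coeff i).toNat, fun x => ?_⟩
  rw [eval_eq_sum_range, ← Finset.sum_sub_distrib]
  refine Finset.sum_congr rfl fun i _ => ?_
  rw [← sub_mul, Int.toNat_sub_toNat_neg]

theorem exists_sum_mul_eq_sum_mul_add (p : ℕ) [Fact p.Prime] (V : Finset ℕ)
    (hV : ∀ v ∈ V, ¬ p ∣ v) :
    ∃ (n d : ℕ) (a b : ℕ → ℕ), 0 < n ∧ ¬ p ∣ n ∧ ∀ k ∈ V,
      (∑ i ∈ Finset.range d, a i * k ^ i) * k = (∑ i ∈ Finset.range d, b i * k ^ i) * k + n := by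
  obtain ⟨q, hq⟩ := exists_mul_eval_eq_prod (V.map Nat.castEmbedding : Finset ℤ)
  obtain ⟨d, a, b, hab⟩ := q.exists_natCoeffs_eval_eq_sub
  refine ⟨∏ v ∈ V, v, d, a, b, Finset.prod_pos fun v hv => Nat.pos_of_ne_zero ?_, fun hp => ?_,
    fun k hk => ?_⟩
  · rintro rfl
    exact hV 0 hv (dvd_zero p)
  · obtain ⟨v, hv, hpv⟩ := (Nat.Prime.prime Fact.out).dvd_finsetProd_iff _ |>.1 hp
    exact hV v hv hpv
  have := hq k (Finset.mem_map_of_mem _ hk)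
  simp only [hab, Finset.prod_map, Nat.castEmbedding, Function.Embedding.coeFn_mk] at this
  zify
  linear_combination this

theorem MulAction.mem_fixedPoints_subgroup_iff {M X : Type*} [Group M] [MulAction M X]
    (D : Subgroup M) (y : X) : y ∈ fixedPoints D X ↔ ∀ d ∈ D, d • y = y :=
  Subtype.forall

def MulAction.fixedPointsSigmaEquiv {M ι : Type*} [Monoid M] (α : ι → Type*)
    [∀ i, MulAction M (α i)] : fixedPoints M (Σ i, α i) ≃ Σ i, fixedPoints M (α i) where
  toFun y := ⟨y.1.1, y.1.2, fun m => eq_of_heq (Sigma.mk.inj_iff.mp (y.2 m)).2⟩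
  invFun z := ⟨⟨z.1, z.2⟩, fun m => congrArg (Sigma.mk z.1) (z.2.2 m)⟩
  left_inv _ := rfl
  right_inv _ := rfl

def MulAction.fixedPointsPiEquiv {M ι : Type*} [Monoid M] (α : ι → Type*)
    [∀ i, MulAction M (α i)] : fixedPoints M (∀ i, α i) ≃ ∀ i, fixedPoints M (α i) where
  toFun f i := ⟨f.1 i, fun m => congrFun (f.2 m) i⟩
  invFun f := ⟨fun i => f i, fun m => funext fun i => (f i).2 m⟩
  left_inv _ := rfl
  right_inv _ := rfl

theorem fixCard_equivMulAction {H X : Type*} [Group H] [MulAction H X] {S Q : Subgroup H}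
    (hQ : Q ≤ S) {Y : Type} (e : Y ≃ X) :
    fixCard S Q Y (e.mulAction S) = Nat.card (fixedPoints Q X) := by
  let _ := e.mulAction S
  have fixed_iff (s : S) (y : Y) : s • y = y ↔ (s : H) • e y = e y := by
    rw [Equiv.smul_def, Equiv.symm_apply_eq]; rfl
  refine Nat.card_congr (e.subtypeEquiv fun y => ?_)
  simp only [Set.mem_ofPred_eq, fixed_iff, mem_fixedPoints_subgroup_iff]
  exact ⟨fun h q hq => h ⟨q, hQ hq⟩ hq, fun h s hs => h s hs⟩

/-- The `M`-set `∑_{i < d} c i • X^i`, realizing the polynomial with coefficients `c`. -/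
abbrev PolyGSet (X : Type*) (d : ℕ) (c : ℕ → ℕ) : Type _ :=
  Σ j : (Σ i : Fin d, Fin (c i)), Fin j.1 → X

theorem card_fixedPoints_polyGSet (M : Type*) [Monoid M] (X : Type*) [MulAction M X] [Finite X]
    (d : ℕ) (c : ℕ → ℕ) :
    Nat.card (fixedPoints M (PolyGSet X d c)) =
      ∑ i ∈ Finset.range d, c i * Nat.card (fixedPoints M X) ^ i := by
  have := Fintype.ofFinite (fixedPoints M X)
  rw [Nat.card_congr ((fixedPointsSigmaEquiv _).trans
    (Equiv.sigmaCongrRight fun _ => fixedPointsPiEquiv _)), Nat.card_eq_fintype_card,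
    Fintype.card_sigma, Fintype.sum_sigma, ← Fin.sum_univ_eq_sum_range]
  simp [Nat.card_eq_fintype_card]

section Quotient

variable {G : Type*} [Group G]

theorem mk_mem_fixedPoints_iff_inv_mem_transporter (S P : Subgroup G) (h : G) :
    (h : G ⧸ S) ∈ fixedPoints P (G ⧸ S) ↔ h⁻¹ ∈ transporter P S := by
  have key : ∀ u : G, u • (h : G ⧸ S) = h ↔ h⁻¹ * u⁻¹ * h⁻¹⁻¹ ∈ S := fun u => by
    rw [MulAction.Quotient.smul_mk, smul_eq_mul, QuotientGroup.eq, inv_inv, mul_inv_rev]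
  refine ⟨fun hh u hu => ?_, fun hh u => (key u).2 (hh _ (inv_mem u.2))⟩
  simpa using (key u⁻¹).1 (hh ⟨u⁻¹, inv_mem hu⟩)

theorem card_transporter (S P : Subgroup G) :
    Nat.card (transporter P S) = Nat.card (fixedPoints P (G ⧸ S)) * Nat.card S := by
  let e : transporter P S ≃ QuotientGroup.mk ⁻¹' (fixedPoints P (G ⧸ S)) :=
    (Equiv.inv G).subtypeEquiv fun g => by
      rw [Equiv.inv_apply, Set.mem_preimage, mk_mem_fixedPoints_iff_inv_mem_transporter, inv_inv]
  rw [Nat.card_congr (e.trans (QuotientGroup.preimageMkEquivSubgroupProdSet S _)),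
    Nat.card_prod, mul_comm]

theorem Sylow.not_dvd_card_fixedPoints {p : ℕ} [Fact p.Prime] [Finite G] (S : Sylow p G)
    {P : Subgroup G} (hP : P ≤ S) : ¬ p ∣ Nat.card (fixedPoints P (G ⧸ (S : Subgroup G))) := by
  have hmod := (S.isPGroup'.to_le hP).card_modEq_card_fixedPoints (G ⧸ (S : Subgroup G))
  rw [← Nat.modEq_zero_iff_dvd]
  exact fun h => S.not_dvd_index (Nat.modEq_zero_iff_dvd.mp (hmod.trans h))

/-- `fixedPoints P (G ⧸ S)` elaborates with the instance `MulAction.mulLeftCosetsCompSubtypeVal`,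
whereas `P` acts on `PolyGSet (G ⧸ S) d c` through `G`; the two agree only after unfolding, so
rewriting needs this specialization. -/
theorem card_fixedPoints_polyGSet_quotient [Finite G] (S P : Subgroup G) (d : ℕ) (c : ℕ → ℕ) :
    Nat.card (fixedPoints P (PolyGSet (G ⧸ S) d c)) =
      ∑ i ∈ Finset.range d, c i * Nat.card (fixedPoints P (G ⧸ S)) ^ i :=
  card_fixedPoints_polyGSet P (G ⧸ S) d c

end Quotient

abbrev bisetAction (G A : Type*) [Group G] [MulAction G A] : MulAction (G × G) (G × A) where
  smul d y := (d.1 * y.1 * d.2⁻¹, d.2 • y.2)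
  one_smul y := by
    change ((1 : G) * y.1 * 1⁻¹, (1 : G) • y.2) = y
    simp
  mul_smul d e y := by
    change (d.1 * e.1 * y.1 * (d.2 * e.2)⁻¹, (d.2 * e.2) • y.2) =
      (d.1 * (e.1 * y.1 * e.2⁻¹) * d.2⁻¹, d.2 • e.2 • y.2)
    simp [mul_smul, mul_assoc]

attribute [local instance] bisetAction

section Biset

variable {G A : Type*} [Group G] [MulAction G A]

theorem bisetAction_smul_eq_self_iff (d : G × G) (y : G × A) :
    d • y = y ↔ d.1 * y.1 = y.1 * d.2 ∧ d.2 • y.2 = y.2 := by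
  change (d.1 * y.1 * d.2⁻¹, d.2 • y.2) = y ↔ _
  rw [Prod.ext_iff, mul_inv_eq_iff_eq_mul]

theorem mem_fixedPoints_graphOf_iff (g : G) (P : Subgroup G) (y : G × A) :
    y ∈ fixedPoints (graphOf g P) (G × A) ↔
      g⁻¹ * y.1 ∈ Subgroup.centralizer (P : Set G) ∧ y.2 ∈ fixedPoints P A := by
  have conj_iff (u : G) : g * u * g⁻¹ * y.1 = y.1 * u ↔ u * (g⁻¹ * y.1) = g⁻¹ * y.1 * u := by
    rw [← mul_right_inj g⁻¹]
    simp only [mul_assoc, inv_mul_cancel_left]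
  rw [mem_fixedPoints_subgroup_iff, mem_fixedPoints_subgroup_iff, Subgroup.mem_centralizer_iff]
  simp only [graphOf, Subgroup.mem_map, forall_exists_index, and_imp,
    forall_apply_eq_imp_iff₂, bisetAction_smul_eq_self_iff, MonoidHom.prod_apply, forall_and,
    MulEquiv.toMonoidHom_eq_coe, MonoidHom.coe_coe, MulAut.conj_apply, MonoidHom.id_apply,
    SetLike.mem_coe, conj_iff]

theorem card_fixedPoints_graphOf (g : G) (P : Subgroup G) :
    Nat.card (fixedPoints (graphOf g P) (G × A)) =
      Nat.card (Subgroup.centralizer (P : Set G)) * Nat.card (fixedPoints P A) := by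
  let e : fixedPoints (graphOf g P) (G × A) ≃
      {z : G × A // z.1 ∈ Subgroup.centralizer (P : Set G) ∧ z.2 ∈ fixedPoints P A} :=
    ((Equiv.mulLeft g⁻¹).prodCongr (Equiv.refl A)).subtypeEquiv fun y =>
      mem_fixedPoints_graphOf_iff g P y
  rw [Nat.card_congr (e.trans Equiv.subtypeProdEquivProd), Nat.card_prod]

theorem eq_graphOf_map_snd {D : Subgroup (G × G)} {x : G} (hx : ∀ d ∈ D, d.1 * x = x * d.2) :
    D = graphOf x (D.map (MonoidHom.snd G G)) := by
  have hconj : ∀ d ∈ D, x * d.2 * x⁻¹ = d.1 := fun d hd => by rw [← hx d hd, mul_inv_cancel_right]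
  ext ⟨s, t⟩
  simp only [graphOf, Subgroup.mem_map, MonoidHom.prod_apply, MulEquiv.toMonoidHom_eq_coe,
    MonoidHom.coe_coe, MulAut.conj_apply, MonoidHom.id_apply, MonoidHom.coe_snd, Prod.mk.injEq]
  constructor
  · intro hst
    exact ⟨t, ⟨(s, t), hst, rfl⟩, hconj _ hst, rfl⟩
  · rintro ⟨_, ⟨d, hd, rfl⟩, rfl, rfl⟩
    rwa [hconj d hd]

theorem isGGraph_of_mem_fixedPoints {S : Subgroup G} {D : Subgroup (G × G)} (hD : D ≤ S.prod S)
    {y : G × A} (hy : y ∈ fixedPoints D (G × A)) : IsGGraph S D := by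
  have hx : ∀ d ∈ D, d.1 * y.1 = y.1 * d.2 := fun d hd =>
    ((bisetAction_smul_eq_self_iff d y).1 ((mem_fixedPoints_subgroup_iff D y).1 hy d hd)).1
  refine ⟨D.map (MonoidHom.snd G G), y.1, ?_, ?_, eq_graphOf_map_snd hx⟩
  · rintro _ ⟨d, hd, rfl⟩
    exact (Subgroup.mem_prod.1 (hD hd)).2
  · rintro _ ⟨d, hd, rfl⟩
    rw [MonoidHom.coe_snd, ← hx d hd, mul_inv_cancel_right]
    exact (Subgroup.mem_prod.1 (hD hd)).1

theorem card_fixedPoints_eq_zero_of_not_isGGraph {S : Subgroup G} {D : Subgroup (G × G)}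
    (hD : D ≤ S.prod S) (h : ¬ IsGGraph S D) : Nat.card (fixedPoints D (G × A)) = 0 :=
  have : IsEmpty (fixedPoints D (G × A)) := ⟨fun y => h (isGGraph_of_mem_fixedPoints hD y.2)⟩
  Nat.card_of_isEmpty

end Biset

theorem stmt8 (p : ℕ) [Fact p.Prime] (G : Type*) [Group G] [Fintype G]
    (S : Sylow p G) (SS : Subgroup (G × G))
    (hSS : SS = (S : Subgroup G).prod (S : Subgroup G)) :
    ∃ (Y Z : Type) (_ : Fintype Y) (_ : Fintype Z)
      (mY : MulAction ↥SS Y) (mZ : MulAction ↥SS Z)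
      (n : ℕ), 0 < n ∧ ¬ p ∣ n ∧
      ∀ D : Subgroup (G × G), D ≤ SS →
        (∀ (P : Subgroup G) (g : G), P ≤ ↑S →
          (∀ u ∈ P, g * u * g⁻¹ ∈ (S : Subgroup G)) →
          D = graphOf g P →
          fixCard SS D Y mY * Nat.card ↥(transporter P ↑S) =
            fixCard SS D Z mZ * Nat.card ↥(transporter P ↑S) +
              n * Nat.card ↥(S : Subgroup G) *
                Nat.card ↥(Subgroup.centralizer (P : Set G))) ∧
        (¬ IsGGraph ↑S D → fixCard SS D Y mY = fixCard SS D Z mZ) := by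
  subst hSS
  obtain ⟨n, d, a, b, hn, hpn, hab⟩ := exists_sum_mul_eq_sum_mul_add p
    ((Finset.range (Nat.card (G ⧸ (S : Subgroup G)) + 1)).filter (¬ p ∣ ·))
    fun v hv => (Finset.mem_filter.1 hv).2
  obtain ⟨N₁, ⟨e₁⟩⟩ := Finite.exists_equiv_fin (G × PolyGSet (G ⧸ (S : Subgroup G)) d a)
  obtain ⟨N₂, ⟨e₂⟩⟩ := Finite.exists_equiv_fin (G × PolyGSet (G ⧸ (S : Subgroup G)) d b)
  refine ⟨Fin N₁, Fin N₂, inferInstance, inferInstance, e₁.symm.mulAction _,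
    e₂.symm.mulAction _, n, hn, hpn, fun D hD => ⟨?_, fun hD' => ?_⟩⟩
  · rintro P g hP - rfl
    rw [fixCard_equivMulAction hD, fixCard_equivMulAction hD, card_fixedPoints_graphOf,
      card_fixedPoints_graphOf, card_fixedPoints_polyGSet_quotient,
      card_fixedPoints_polyGSet_quotient, card_transporter]
    have hk := hab (Nat.card (fixedPoints P (G ⧸ (S : Subgroup G)))) <| Finset.mem_filter.2
      ⟨Finset.mem_range_succ_iff.2 (Nat.card_le_card_of_injective _ Subtype.val_injective),
        S.not_dvd_card_fixedPoints hP⟩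
    linear_combination (Nat.card (Subgroup.centralizer (P : Set G)) * Nat.card S) * hk
  · rw [fixCard_equivMulAction hD, fixCard_equivMulAction hD,
      card_fixedPoints_eq_zero_of_not_isGGraph hD hD',
      card_fixedPoints_eq_zero_of_not_isGGraph hD hD']
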